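/- Let τ(x) = ‖y⁻¹·x‖_K⁴ and 1 < p. Then, where τ > 0, the horizontal p-Laplacian satisfies Δ_{0,p}τ := ‖∇₀τ‖^{p-2}Δ₀τ + (p-2)‖∇₀τ‖^{p-4}Δ_{0,∞}τ = (3p/4)·‖∇₀τ‖^p/τ. In particular Δ_{0,p}τ ≥ 0. -/

import Mathlib

/-!
The fields `X₁, X₂` are left-invariant, so every horizontal derivative of
`τ = N ∘ L_{y⁻¹}`, with `N q = (q₁² + q₂²)² + 16 q₃²`, is the corresponding derivative of `N`
at `q = y⁻¹·x`. There, with `r = q₁² + q₂²`, one computes `X₁N = 4 r q₁ - 16 q₃ q₂`,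
`X₂N = 4 r q₂ + 16 q₃ q₁`, the symmetrized horizontal Hessian `12 r · I` and
`‖∇₀N‖² = 16 r N`. Hence `Δ₀N = 24 r`, `Δ_{0,∞}N = 12 r ‖∇₀N‖²`, and
`Δ_{0,p}N = 12 p r ‖∇₀N‖^{p-2} = (3p/4) ‖∇₀N‖^p / N`.
-/

/-- The Heisenberg horizontal vector field `X₁ = ∂_{x₁} - (x₂/2)∂_{x₃}`. -/
noncomputable def X1 (f : ℝ × ℝ × ℝ → ℝ) (x : ℝ × ℝ × ℝ) : ℝ :=
  deriv (fun t => f (t, x.2.1, x.2.2)) x.1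
    - x.2.1 / 2 * deriv (fun t => f (x.1, x.2.1, t)) x.2.2

/-- The Heisenberg horizontal vector field `X₂ = ∂_{x₂} + (x₁/2)∂_{x₃}`. -/
noncomputable def X2 (f : ℝ × ℝ × ℝ → ℝ) (x : ℝ × ℝ × ℝ) : ℝ :=
  deriv (fun t => f (x.1, t, x.2.2)) x.2.1
    + x.1 / 2 * deriv (fun t => f (x.1, x.2.1, t)) x.2.2

/-- The Heisenberg group multiplication on `ℝ³`. -/
noncomputable def hmul (x y : ℝ × ℝ × ℝ) : ℝ × ℝ × ℝ :=
  (x.1 + y.1, x.2.1 + y.2.1, x.2.2 + y.2.2 + (x.1 * y.2.1 - y.1 * x.2.1) / 2)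

/-- The Heisenberg group inverse. -/
def hinv (x : ℝ × ℝ × ℝ) : ℝ × ℝ × ℝ := (-x.1, -x.2.1, -x.2.2)

/-- The Korányi quasi-norm on `ℍ¹ = ℝ³`. -/
noncomputable def knorm (x : ℝ × ℝ × ℝ) : ℝ :=
  ((x.1 ^ 2 + x.2.1 ^ 2) ^ 2 + 16 * x.2.2 ^ 2) ^ ((1 : ℝ) / 4)

/-- The Korányi distance `d(x,x₀) = ‖x₀⁻¹·x‖_K`. -/
noncomputable def kdist (x x0 : ℝ × ℝ × ℝ) : ℝ := knorm (hmul (hinv x0) x)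

lemma deriv_comp_of_hasDerivAt {E : Type*} [NormedAddCommGroup E] [NormedSpace ℝ E]
    {F : E → ℝ} {c : ℝ → E} {v : E} {t : ℝ} (hF : DifferentiableAt ℝ F (c t))
    (hc : HasDerivAt c v t) : deriv (fun s => F (c s)) t = fderiv ℝ F (c t) v :=
  (hF.hasFDerivAt.comp_hasDerivAt t hc).deriv

lemma X1_eq_fderiv {F : ℝ × ℝ × ℝ → ℝ} {x : ℝ × ℝ × ℝ} (hF : DifferentiableAt ℝ F x) :
    X1 F x = fderiv ℝ F x (1, 0, -(x.2.1 / 2)) := by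
  have h₁ : HasDerivAt (fun t : ℝ => (t, x.2.1, x.2.2)) (1, 0, 0) x.1 :=
    (hasDerivAt_id _).prodMk ((hasDerivAt_const _ _).prodMk (hasDerivAt_const _ _))
  have h₃ : HasDerivAt (fun t : ℝ => (x.1, x.2.1, t)) (0, 0, 1) x.2.2 :=
    (hasDerivAt_const _ _).prodMk ((hasDerivAt_const _ _).prodMk (hasDerivAt_id _))
  have hv : ((1, 0, -(x.2.1 / 2)) : ℝ × ℝ × ℝ) = (1, 0, 0) + (-(x.2.1 / 2)) • (0, 0, 1) := by
    simp
  rw [X1, deriv_comp_of_hasDerivAt hF h₁, deriv_comp_of_hasDerivAt hF h₃, hv, map_add, map_smul,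
    smul_eq_mul]
  ring

lemma X2_eq_fderiv {F : ℝ × ℝ × ℝ → ℝ} {x : ℝ × ℝ × ℝ} (hF : DifferentiableAt ℝ F x) :
    X2 F x = fderiv ℝ F x (0, 1, x.1 / 2) := by
  have h₂ : HasDerivAt (fun t : ℝ => (x.1, t, x.2.2)) (0, 1, 0) x.2.1 :=
    (hasDerivAt_const _ _).prodMk ((hasDerivAt_id _).prodMk (hasDerivAt_const _ _))
  have h₃ : HasDerivAt (fun t : ℝ => (x.1, x.2.1, t)) (0, 0, 1) x.2.2 :=
    (hasDerivAt_const _ _).prodMk ((hasDerivAt_const _ _).prodMk (hasDerivAt_id _))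
  have hv : ((0, 1, x.1 / 2) : ℝ × ℝ × ℝ) = (0, 1, 0) + (x.1 / 2) • (0, 0, 1) := by
    simp
  rw [X2, deriv_comp_of_hasDerivAt hF h₂, deriv_comp_of_hasDerivAt hF h₃, hv, map_add, map_smul,
    smul_eq_mul]

lemma hasDerivAt_hmul_line_fst (g x : ℝ × ℝ × ℝ) :
    HasDerivAt (fun t => hmul g (t, x.2.1, x.2.2)) (1, 0, -(g.2.1 / 2)) x.1 := by
  simp only [hmul]
  refine ((hasDerivAt_id _).const_add _).prodMk ((hasDerivAt_const _ _).prodMk ?_)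
  simpa [neg_div] using ((((hasDerivAt_const x.1 (g.1 * x.2.1)).sub
    ((hasDerivAt_id _).mul_const g.2.1)).div_const 2).const_add (g.2.2 + x.2.2))

lemma hasDerivAt_hmul_line_snd (g x : ℝ × ℝ × ℝ) :
    HasDerivAt (fun t => hmul g (x.1, t, x.2.2)) (0, 1, g.1 / 2) x.2.1 := by
  simp only [hmul]
  refine (hasDerivAt_const _ _).prodMk (((hasDerivAt_id _).const_add _).prodMk ?_)
  simpa using ((((hasDerivAt_id _).const_mul g.1).sub_const (x.1 * g.2.1)).div_const 2).const_add
    (g.2.2 + x.2.2)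

lemma hasDerivAt_hmul_line_thd (g x : ℝ × ℝ × ℝ) :
    HasDerivAt (fun t => hmul g (x.1, x.2.1, t)) (0, 0, 1) x.2.2 := by
  simp only [hmul]
  exact (hasDerivAt_const _ _).prodMk ((hasDerivAt_const _ _).prodMk
    (((hasDerivAt_id _).const_add _).add_const _))

lemma X1_comp_hmul (g : ℝ × ℝ × ℝ) {F : ℝ × ℝ × ℝ → ℝ} {x : ℝ × ℝ × ℝ}
    (hF : DifferentiableAt ℝ F (hmul g x)) :
    X1 (fun z => F (hmul g z)) x = X1 F (hmul g x) := by
  have hv : ((1, 0, -((hmul g x).2.1 / 2)) : ℝ × ℝ × ℝ)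
      = (1, 0, -(g.2.1 / 2)) + (-(x.2.1 / 2)) • (0, 0, 1) := by
    simp [hmul]; ring
  rw [X1_eq_fderiv hF, X1, deriv_comp_of_hasDerivAt hF (hasDerivAt_hmul_line_fst g x),
    deriv_comp_of_hasDerivAt hF (hasDerivAt_hmul_line_thd g x), hv, map_add, map_smul, smul_eq_mul]
  ring

lemma X2_comp_hmul (g : ℝ × ℝ × ℝ) {F : ℝ × ℝ × ℝ → ℝ} {x : ℝ × ℝ × ℝ}
    (hF : DifferentiableAt ℝ F (hmul g x)) :
    X2 (fun z => F (hmul g z)) x = X2 F (hmul g x) := by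
  have hv : ((0, 1, (hmul g x).1 / 2) : ℝ × ℝ × ℝ) = (0, 1, g.1 / 2) + (x.1 / 2) • (0, 0, 1) := by
    simp [hmul]; ring
  rw [X2_eq_fderiv hF, X2, deriv_comp_of_hasDerivAt hF (hasDerivAt_hmul_line_snd g x),
    deriv_comp_of_hasDerivAt hF (hasDerivAt_hmul_line_thd g x), hv, map_add, map_smul, smul_eq_mul]

noncomputable def horizontalGradNorm (f : ℝ × ℝ × ℝ → ℝ) (x : ℝ × ℝ × ℝ) : ℝ :=
  √(X1 f x ^ 2 + X2 f x ^ 2)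

noncomputable def horizontalLaplacian (f : ℝ × ℝ × ℝ → ℝ) (x : ℝ × ℝ × ℝ) : ℝ :=
  X1 (X1 f) x + X2 (X2 f) x

noncomputable def horizontalInfLaplacian (f : ℝ × ℝ × ℝ → ℝ) (x : ℝ × ℝ × ℝ) : ℝ :=
  X1 (X1 f) x * X1 f x ^ 2 + 2 * ((X1 (X2 f) x + X2 (X1 f) x) / 2) * X1 f x * X2 f x
    + X2 (X2 f) x * X2 f x ^ 2

noncomputable def horizontalPLaplacian (p : ℝ) (f : ℝ × ℝ × ℝ → ℝ) (x : ℝ × ℝ × ℝ) : ℝ :=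
  horizontalGradNorm f x ^ (p - 2) * horizontalLaplacian f x
    + (p - 2) * horizontalGradNorm f x ^ (p - 4) * horizontalInfLaplacian f x

section LeftInvariance

variable (g : ℝ × ℝ × ℝ) {F : ℝ × ℝ × ℝ → ℝ}

lemma X1_comp_hmul_eq (hF : Differentiable ℝ F) :
    X1 (fun z => F (hmul g z)) = fun z => X1 F (hmul g z) :=
  funext fun _ => X1_comp_hmul g (hF _)

lemma X2_comp_hmul_eq (hF : Differentiable ℝ F) :
    X2 (fun z => F (hmul g z)) = fun z => X2 F (hmul g z) :=
  funext fun _ => X2_comp_hmul g (hF _)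

lemma horizontalGradNorm_comp_hmul (hF : Differentiable ℝ F) (x : ℝ × ℝ × ℝ) :
    horizontalGradNorm (fun z => F (hmul g z)) x = horizontalGradNorm F (hmul g x) := by
  rw [horizontalGradNorm, X1_comp_hmul_eq g hF, X2_comp_hmul_eq g hF, horizontalGradNorm]

lemma horizontalPLaplacian_comp_hmul (p : ℝ) (hF : Differentiable ℝ F)
    (hF₁ : Differentiable ℝ (X1 F)) (hF₂ : Differentiable ℝ (X2 F)) (x : ℝ × ℝ × ℝ) :
    horizontalPLaplacian p (fun z => F (hmul g z)) x = horizontalPLaplacian p F (hmul g x) := by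
  simp only [horizontalPLaplacian, horizontalGradNorm_comp_hmul g hF, horizontalLaplacian,
    horizontalInfLaplacian, X1_comp_hmul_eq g hF, X2_comp_hmul_eq g hF, X1_comp_hmul_eq g hF₁,
    X1_comp_hmul_eq g hF₂, X2_comp_hmul_eq g hF₁, X2_comp_hmul_eq g hF₂]

end LeftInvariance

noncomputable def knormFour (q : ℝ × ℝ × ℝ) : ℝ := (q.1 ^ 2 + q.2.1 ^ 2) ^ 2 + 16 * q.2.2 ^ 2

lemma knorm_pow_four (q : ℝ × ℝ × ℝ) : knorm q ^ 4 = knormFour q := by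
  rw [knorm, ← Real.rpow_natCast, ← Real.rpow_mul (by positivity), knormFour]
  norm_num

lemma differentiable_knormFour : Differentiable ℝ knormFour := by
  unfold knormFour; fun_prop

lemma X1_knormFour :
    X1 knormFour = fun q => 4 * (q.1 ^ 2 + q.2.1 ^ 2) * q.1 - 16 * q.2.2 * q.2.1 := by
  ext q
  simp (disch := fun_prop) [X1, knormFour]
  ring

lemma X2_knormFour :
    X2 knormFour = fun q => 4 * (q.1 ^ 2 + q.2.1 ^ 2) * q.2.1 + 16 * q.2.2 * q.1 := by
  ext q
  simp (disch := fun_prop) [X2, knormFour]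
  ring

lemma X1_X1_knormFour (q : ℝ × ℝ × ℝ) : X1 (X1 knormFour) q = 12 * (q.1 ^ 2 + q.2.1 ^ 2) := by
  rw [X1_knormFour]
  simp (disch := fun_prop) [X1]
  ring

lemma X2_X2_knormFour (q : ℝ × ℝ × ℝ) : X2 (X2 knormFour) q = 12 * (q.1 ^ 2 + q.2.1 ^ 2) := by
  rw [X2_knormFour]
  simp (disch := fun_prop) [X2]
  ring

lemma X1_X2_knormFour (q : ℝ × ℝ × ℝ) : X1 (X2 knormFour) q = 16 * q.2.2 := by
  rw [X2_knormFour]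
  simp (disch := fun_prop) [X1]
  ring

lemma X2_X1_knormFour (q : ℝ × ℝ × ℝ) : X2 (X1 knormFour) q = -(16 * q.2.2) := by
  rw [X1_knormFour]
  simp (disch := fun_prop) [X2]
  ring

lemma rpow_sub_two_mul_add_rpow_sub_four_mul_eq (p : ℝ) {r N g : ℝ} (hg : 0 ≤ g) (hr : 0 ≤ r)
    (hN : r ^ 2 ≤ N) (hg2 : g ^ 2 = 16 * r * N) :
    g ^ (p - 2) * (24 * r) + (p - 2) * g ^ (p - 4) * (12 * r * g ^ 2) = 3 * p / 4 * g ^ p / N := by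
  rcases hr.eq_or_lt with rfl | hr
  · obtain rfl : g = 0 := by simpa using hg2
    rcases eq_or_ne p 0 with rfl | hp
    · simp
    · simp [Real.zero_rpow hp]
  have hN : 0 < N := (by positivity : 0 < r ^ 2).trans_le hN
  have hg : 0 < g := hg.lt_of_ne' (by rintro rfl; nlinarith [mul_pos hr hN])
  have h2 : g ^ (p - 2) = g ^ p / g ^ 2 := by exact_mod_cast Real.rpow_sub_natCast hg.ne' p 2
  have h4 : g ^ (p - 4) = g ^ p / g ^ 4 := by exact_mod_cast Real.rpow_sub_natCast hg.ne' p 4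
  rw [h2, h4, show g ^ 4 = (g ^ 2) ^ 2 by ring, hg2]
  field_simp
  ring

lemma horizontalPLaplacian_knormFour (p : ℝ) (q : ℝ × ℝ × ℝ) :
    horizontalPLaplacian p knormFour q
      = 3 * p / 4 * horizontalGradNorm knormFour q ^ p / knormFour q := by
  have hg2 : horizontalGradNorm knormFour q ^ 2 = 16 * (q.1 ^ 2 + q.2.1 ^ 2) * knormFour q := by
    rw [horizontalGradNorm, Real.sq_sqrt (by positivity), X1_knormFour, X2_knormFour, knormFour]
    ring
  have hΔ : horizontalLaplacian knormFour q = 24 * (q.1 ^ 2 + q.2.1 ^ 2) := by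
    rw [horizontalLaplacian, X1_X1_knormFour, X2_X2_knormFour]
    ring
  have hΔinf : horizontalInfLaplacian knormFour q
      = 12 * (q.1 ^ 2 + q.2.1 ^ 2) * horizontalGradNorm knormFour q ^ 2 := by
    rw [horizontalInfLaplacian, X1_X1_knormFour, X2_X2_knormFour, X1_X2_knormFour,
      X2_X1_knormFour, horizontalGradNorm, Real.sq_sqrt (by positivity)]
    ring
  rw [horizontalPLaplacian, hΔ, hΔinf]
  exact rpow_sub_two_mul_add_rpow_sub_four_mul_eq p (Real.sqrt_nonneg _) (by positivity)
    (le_add_of_nonneg_right (by positivity)) hg2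

theorem horizontal_p_laplacian_tau_general (p : ℝ) (hp : 1 < p) (y x : ℝ × ℝ × ℝ) :
    let tau : ℝ × ℝ × ℝ → ℝ := fun z => (kdist z y) ^ 4
    let a := X1 tau x
    let b := X2 tau x
    let t11 := X1 (X1 tau) x
    let t22 := X2 (X2 tau) x
    let t12 := (X1 (X2 tau) x + X2 (X1 tau) x) / 2
    let g := Real.sqrt (a ^ 2 + b ^ 2)
    let lap0 := t11 + t22
    let lapInf := t11 * a ^ 2 + 2 * t12 * a * b + t22 * b ^ 2
    g ^ (p - 2) * lap0 + (p - 2) * g ^ (p - 4) * lapInf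
        = 3 * p / 4 * g ^ p / tau x ∧
    0 ≤ g ^ (p - 2) * lap0 + (p - 2) * g ^ (p - 4) * lapInf := by
  intro tau a b t11 t22 t12 g lap0 lapInf
  have hτ : tau = fun z => knormFour (hmul (hinv y) z) := funext fun z => knorm_pow_four _
  have hX1 : Differentiable ℝ (X1 knormFour) := by rw [X1_knormFour]; fun_prop
  have hX2 : Differentiable ℝ (X2 knormFour) := by rw [X2_knormFour]; fun_prop
  have hpLap : g ^ (p - 2) * lap0 + (p - 2) * g ^ (p - 4) * lapInf = 3 * p / 4 * g ^ p / tau x := by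
    change horizontalPLaplacian p tau x = 3 * p / 4 * horizontalGradNorm tau x ^ p / tau x
    rw [hτ, horizontalPLaplacian_comp_hmul _ _ differentiable_knormFour hX1 hX2,
      horizontalGradNorm_comp_hmul _ differentiable_knormFour, horizontalPLaplacian_knormFour]
  refine ⟨hpLap, hpLap ▸ div_nonneg ?_ (by positivity)⟩
  exact mul_nonneg (by linarith) (Real.rpow_nonneg (Real.sqrt_nonneg _) p)

/-- The horizontal `p`-Laplacian of `τ(x) = ‖y⁻¹·x‖_K⁴` satisfies
`Δ_{0,p}τ = (3p/4)‖∇₀τ‖^p/τ ≥ 0` where `τ > 0`, for `p > 1`. -/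
theorem horizontal_p_laplacian_tau (p : ℝ) (hp : 1 < p) (y x : ℝ × ℝ × ℝ)
    (htau : 0 < (kdist x y) ^ 4) :
    let tau : ℝ × ℝ × ℝ → ℝ := fun z => (kdist z y) ^ 4
    let a := X1 tau x
    let b := X2 tau x
    let t11 := X1 (X1 tau) x
    let t22 := X2 (X2 tau) x
    let t12 := (X1 (X2 tau) x + X2 (X1 tau) x) / 2
    let g := Real.sqrt (a ^ 2 + b ^ 2)
    let lap0 := t11 + t22
    let lapInf := t11 * a ^ 2 + 2 * t12 * a * b + t22 * b ^ 2
    g ^ (p - 2) * lap0 + (p - 2) * g ^ (p - 4) * lapInf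
        = 3 * p / 4 * g ^ p / tau x ∧
    0 ≤ g ^ (p - 2) * lap0 + (p - 2) * g ^ (p - 4) * lapInf :=
  horizontal_p_laplacian_tau_general p hp y x
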